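/- For c ≥ 6, the counts e(c,b) satisfy the recursion e(c,b) = e(c−2,b) + 2·e(c−2,b−1) + 2·e(c−3,b−1). -/

import Mathlib

/-!
Count the nonempty sequences of nonzero integers by length parity `r`, absolute sum `s` and
number `ℓ` of sign changes, so that `e c b` is the even count at `s = c - b + 1`,
`ℓ = c - 2b + 2`. Split off the first entry `a`. If `|a| ≥ 2`, lowering `|a|` by one keeps the
sign pattern; if `a = ±1`, the rest is a sequence of the opposite parity, with or without a sign
change at `a`. For `s ≥ 2` this gives
  `N r s ℓ = N r (s-1) ℓ + N (r+1) (s-1) ℓ + N (r+1) (s-1) (ℓ-1)`,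
and applying it once more to the two opposite-parity terms eliminates them:
  `N r s ℓ = 2 N r (s-1) ℓ + 2 N r (s-2) (ℓ-1) + N r (s-2) (ℓ-2)` for `s ≥ 3`.
When `c ≥ 6` and `s ≤ 2`, every `ℓ` involved is negative and all counts vanish.
-/

open Classical

/-- The number of sign changes in a finite sequence of integers. -/
def signChanges (l : List ℤ) : ℕ :=
  ((l.zip l.tail).filter (fun p => p.1 * p.2 < 0)).length

/-- The sum of the absolute values of the entries. -/
def absSum (l : List ℤ) : ℕ := (l.map Int.natAbs).sum

/-- An even continued fraction representation: a nonempty even-length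
sequence of nonzero integers. -/
def IsECF (l : List ℤ) : Prop :=
  l ≠ [] ∧ Even l.length ∧ ∀ x ∈ l, x ≠ 0

/-- Palindromic or anti-palindromic sequences. -/
def IsPalOrAnti (l : List ℤ) : Prop :=
  l.reverse = l ∨ l.reverse = l.map (fun x => -x)

/-- The set `E(c)` of even continued fractions with crossing number `c`. -/
def Ecross (c : ℕ) : Set (List ℤ) :=
  {l | IsECF l ∧ (2 * absSum l : ℤ) - signChanges l = c}

/-- The set `E(c,b)` of even continued fractions with crossing number `c`
and braid index `b`. -/
def Eset (c b : ℕ) : Set (List ℤ) :=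
  {l | IsECF l ∧ (2 * absSum l : ℤ) - signChanges l = c ∧
    (absSum l : ℤ) - signChanges l + 1 = b}

noncomputable def e (c b : ℕ) : ℕ := (Eset c b).ncard

noncomputable def eTot (c : ℕ) : ℕ := (Ecross c).ncard

noncomputable def ep (c b : ℕ) : ℕ := (Eset c b ∩ {l | IsPalOrAnti l}).ncard

noncomputable def epTot (c : ℕ) : ℕ := (Ecross c ∩ {l | IsPalOrAnti l}).ncard

lemma absSum_cons (a : ℤ) (l : List ℤ) : absSum (a :: l) = a.natAbs + absSum l := by
  simp [absSum]

lemma natAbs_le_absSum {l : List ℤ} {x : ℤ} (hx : x ∈ l) : x.natAbs ≤ absSum l :=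
  List.le_sum_of_mem (List.mem_map_of_mem hx)

lemma length_le_absSum {l : List ℤ} (h : ∀ x ∈ l, x ≠ 0) : l.length ≤ absSum l := by
  simpa [absSum] using List.length_le_sum_of_one_le (l.map Int.natAbs)
    (by simpa [Int.natAbs_pos, Nat.one_le_iff_ne_zero] using h)

lemma signChanges_cons_cons (a b : ℤ) (l : List ℤ) :
    signChanges (a :: b :: l) = signChanges (b :: l) + if a * b < 0 then 1 else 0 := by
  simp only [signChanges, List.tail_cons, List.zip_cons_cons, List.filter_cons]
  split_ifs <;> simp_all

lemma signChanges_map_sign (l : List ℤ) : signChanges (l.map Int.sign) = signChanges l := by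
  simp only [signChanges, ← List.map_tail, List.zip_map, List.filter_map, List.length_map]
  congr 2
  funext p
  simp [← Int.sign_mul, Int.sign_neg_iff]

lemma signChanges_lt_length {l : List ℤ} (hl : l ≠ []) : signChanges l < l.length := by
  have hle := List.length_filter_le (fun p : ℤ × ℤ => decide (p.1 * p.2 < 0)) (l.zip l.tail)
  simp only [List.length_zip, List.length_tail] at hle
  have := List.length_pos_iff.2 hl
  unfold signChanges
  omega

namespace Int

lemma sign_add_sign (a : ℤ) : (a + a.sign).sign = a.sign := by
  rcases lt_trichotomy a 0 with h | rfl | h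
  · rw [sign_eq_neg_one_of_neg h, sign_eq_neg_one_of_neg (by omega)]
  · rfl
  · rw [sign_eq_one_of_pos h, sign_eq_one_of_pos (by omega)]

lemma natAbs_add_sign {a : ℤ} (ha : a ≠ 0) : (a + a.sign).natAbs = a.natAbs + 1 := by
  rcases lt_or_gt_of_ne ha with h | h
  · rw [sign_eq_neg_one_of_neg h]; omega
  · rw [sign_eq_one_of_pos h]; omega

lemma add_sign_strictMono : StrictMono fun a : ℤ => a + a.sign := by
  intro a b hab
  dsimp only
  rcases lt_trichotomy a 0 with ha | rfl | ha <;> rcases lt_trichotomy b 0 with hb | rfl | hb <;>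
    simp [sign_eq_neg_one_of_neg, sign_eq_one_of_pos, *] <;> omega

lemma natAbs_sign_le_one (a : ℤ) : a.sign.natAbs ≤ 1 := by
  rcases sign_trichotomy a with h | h | h <;> simp [h]

lemma exists_add_sign_eq {a : ℤ} (ha : 2 ≤ a.natAbs) : ∃ a' ≠ 0, a' + a'.sign = a := by
  rcases lt_or_gt_of_ne (show a ≠ 0 by omega) with h | h
  · exact ⟨a + 1, by omega, by rw [sign_eq_neg_one_of_neg (by omega)]; ring⟩
  · exact ⟨a - 1, by omega, by rw [sign_eq_one_of_pos (by omega)]; ring⟩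

end Int

def nonzeroSeqs (r : ZMod 2) (s ℓ : ℤ) : Set (List ℤ) :=
  {l | l ≠ [] ∧ (l.length : ZMod 2) = r ∧ (∀ x ∈ l, x ≠ 0) ∧ (absSum l : ℤ) = s ∧
    (signChanges l : ℤ) = ℓ}

section nonzeroSeqs

variable {r : ZMod 2} {s ℓ : ℤ}

instance finite_nonzeroSeqs : Finite (nonzeroSeqs r s ℓ) := by
  refine Set.Finite.to_subtype <| ((List.finite_length_le (Set.Icc (-s) s) s.toNat).image
    (List.map Subtype.val)).subset ?_
  rintro l ⟨-, -, hnz, hs, -⟩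
  have hmem : ∀ x ∈ l, x ∈ Set.Icc (-s) s := fun x hx => by
    have := natAbs_le_absSum hx
    constructor <;> omega
  have hlen : l.length ≤ s.toNat := by have := length_le_absSum hnz; omega
  lift l to List (Set.Icc (-s) s) using hmem
  exact ⟨l, by simpa using hlen, rfl⟩

lemma nonzeroSeqs_eq_empty (h : ℓ < 0 ∨ s ≤ ℓ) : nonzeroSeqs r s ℓ = ∅ := by
  refine Set.eq_empty_of_forall_notMem fun l ⟨hne, _, hnz, hs, hℓ⟩ => ?_
  have := signChanges_lt_length hne
  have := length_le_absSum hnz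
  omega

def bumpHead : List ℤ → List ℤ
  | [] => []
  | a :: l => (a + a.sign) :: l

lemma bumpHead_injective : Function.Injective bumpHead := by
  rintro (_ | ⟨a, l⟩) (_ | ⟨b, m⟩) h <;> simp only [bumpHead, List.cons.injEq, reduceCtorEq] at h
  · rfl
  · rw [Int.add_sign_strictMono.injective h.1, h.2]

lemma ncard_nonzeroSeqs_of_neg (h : ℓ < 0) : (nonzeroSeqs r s ℓ).ncard = 0 := by
  rw [nonzeroSeqs_eq_empty (Or.inl h), Set.ncard_empty]

lemma bumpHead_cons_mem_nonzeroSeqs_iff {a : ℤ} (ha : a ≠ 0) (l : List ℤ) :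
    bumpHead (a :: l) ∈ nonzeroSeqs r s ℓ ↔ a :: l ∈ nonzeroSeqs r (s - 1) ℓ := by
  have hsc : signChanges ((a + a.sign) :: l) = signChanges (a :: l) := by
    rw [← signChanges_map_sign, List.map_cons, Int.sign_add_sign, ← List.map_cons,
      signChanges_map_sign]
  have hne : a + a.sign ≠ 0 := by have := Int.natAbs_add_sign ha; omega
  simp only [bumpHead, nonzeroSeqs, Set.mem_ofPred_eq, List.forall_mem_cons, absSum_cons,
    Int.natAbs_add_sign ha, hsc, List.length_cons, ne_eq, reduceCtorEq, not_false_eq_true,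
    true_and, ha, hne]
  constructor <;> rintro ⟨h1, h2, h3, h4⟩ <;> exact ⟨h1, h2, by omega, h4⟩

lemma cons_cons_mem_nonzeroSeqs_iff (a b : ℤ) (l : List ℤ) :
    a :: b :: l ∈ nonzeroSeqs r s ℓ ↔
      a ≠ 0 ∧ b :: l ∈ nonzeroSeqs (r + 1) (s - a.natAbs) (ℓ - if a * b < 0 then 1 else 0) := by
  simp only [nonzeroSeqs, Set.mem_ofPred_eq, List.forall_mem_cons, absSum_cons,
    signChanges_cons_cons, List.length_cons, ne_eq, reduceCtorEq, not_false_eq_true, true_and]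
  have hpar : ∀ x : ZMod 2, x + 1 = r ↔ x = r + 1 := by revert r; decide
  rw [Nat.cast_succ (l.length + 1), hpar]
  split_ifs <;> push_cast <;>
    exact ⟨fun ⟨hr, ⟨ha, hnz⟩, hs, hℓ⟩ => ⟨ha, hr, hnz, by omega, by omega⟩,
      fun ⟨ha, hr, hnz, hs, hℓ⟩ => ⟨hr, ⟨ha, hnz⟩, by omega, by omega⟩⟩

lemma sign_cons_mem_nonzeroSeqs_iff (b : ℤ) (l : List ℤ) :
    b.sign :: b :: l ∈ nonzeroSeqs r s ℓ ↔ b :: l ∈ nonzeroSeqs (r + 1) (s - 1) ℓ := by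
  rw [cons_cons_mem_nonzeroSeqs_iff]
  by_cases hb : b = 0
  · simp [hb, nonzeroSeqs]
  · simp [hb, Int.natAbs_sign_of_ne_zero hb, (abs_nonneg b).not_gt]

lemma neg_sign_cons_mem_nonzeroSeqs_iff (b : ℤ) (l : List ℤ) :
    -b.sign :: b :: l ∈ nonzeroSeqs r s ℓ ↔ b :: l ∈ nonzeroSeqs (r + 1) (s - 1) (ℓ - 1) := by
  rw [cons_cons_mem_nonzeroSeqs_iff]
  by_cases hb : b = 0
  · simp [hb, nonzeroSeqs]
  · simp [hb, Int.natAbs_sign_of_ne_zero hb, neg_mul]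

lemma ne_nil_of_cons_mem_nonzeroSeqs {a : ℤ} {l : List ℤ} (hl : a :: l ∈ nonzeroSeqs r s ℓ)
    (ha : a.natAbs < s) : l ≠ [] := by
  rintro rfl
  have := hl.2.2.2.1
  rw [absSum_cons, show absSum [] = 0 from rfl] at this
  omega

lemma nonzeroSeqs_eq_union (hs : 2 ≤ s) :
    nonzeroSeqs r s ℓ =
      bumpHead '' nonzeroSeqs r (s - 1) ℓ ∪
      (fun l => l.headI.sign :: l) '' nonzeroSeqs (r + 1) (s - 1) ℓ ∪
      (fun l => -l.headI.sign :: l) '' nonzeroSeqs (r + 1) (s - 1) (ℓ - 1) := by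
  ext l
  constructor
  · intro hl
    obtain ⟨a, m, rfl⟩ := List.exists_cons_of_ne_nil hl.1
    by_cases ha : 2 ≤ a.natAbs
    · obtain ⟨a', ha', rfl⟩ := Int.exists_add_sign_eq ha
      exact Or.inl (Or.inl ⟨a' :: m, (bumpHead_cons_mem_nonzeroSeqs_iff ha' m).1 hl, rfl⟩)
    obtain ⟨b, t, rfl⟩ :=
      List.exists_cons_of_ne_nil (ne_nil_of_cons_mem_nonzeroSeqs hl (by omega))
    have hb : b ≠ 0 := ((cons_cons_mem_nonzeroSeqs_iff a b t).1 hl).2.2.2.1 b (by simp)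
    have ha : a.natAbs = 1 := by have := hl.2.2.1 a (by simp); omega
    have : b.sign = 1 ∨ b.sign = -1 := by have := Int.natAbs_sign_of_ne_zero hb; omega
    rcases (by omega : a = b.sign ∨ a = -b.sign) with rfl | rfl
    · exact Or.inl (Or.inr ⟨b :: t, (sign_cons_mem_nonzeroSeqs_iff b t).1 hl, rfl⟩)
    · exact Or.inr ⟨b :: t, (neg_sign_cons_mem_nonzeroSeqs_iff b t).1 hl, rfl⟩
  · rintro ((⟨m, hm, rfl⟩ | ⟨m, hm, rfl⟩) | ⟨m, hm, rfl⟩) <;>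
      obtain ⟨b, t, rfl⟩ := List.exists_cons_of_ne_nil hm.1
    · exact (bumpHead_cons_mem_nonzeroSeqs_iff (hm.2.2.1 b (by simp)) t).2 hm
    · exact (sign_cons_mem_nonzeroSeqs_iff b t).2 hm
    · exact (neg_sign_cons_mem_nonzeroSeqs_iff b t).2 hm

lemma bumpHead_ne_cons {m : List ℤ} (hm : m ∈ nonzeroSeqs r s ℓ) {ε : ℤ} (hε : ε.natAbs ≤ 1)
    (m' : List ℤ) : bumpHead m ≠ ε :: m' := by
  obtain ⟨a, t, rfl⟩ := List.exists_cons_of_ne_nil hm.1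
  have ha : a ≠ 0 := hm.2.2.1 a (by simp)
  intro h
  have := congrArg Int.natAbs (List.cons.inj h).1
  rw [Int.natAbs_add_sign ha] at this
  omega

lemma ncard_nonzeroSeqs (hs : 2 ≤ s) :
    (nonzeroSeqs r s ℓ).ncard = (nonzeroSeqs r (s - 1) ℓ).ncard +
      (nonzeroSeqs (r + 1) (s - 1) ℓ).ncard + (nonzeroSeqs (r + 1) (s - 1) (ℓ - 1)).ncard := by
  have hdisj₁ : Disjoint (bumpHead '' nonzeroSeqs r (s - 1) ℓ)
      ((fun l => l.headI.sign :: l) '' nonzeroSeqs (r + 1) (s - 1) ℓ) := by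
    refine Set.disjoint_left.2 ?_
    rintro _ ⟨m, hm, rfl⟩ ⟨m', -, h⟩
    exact bumpHead_ne_cons hm (Int.natAbs_sign_le_one _) m' h.symm
  have hdisj₂ : Disjoint (bumpHead '' nonzeroSeqs r (s - 1) ℓ ∪
      (fun l => l.headI.sign :: l) '' nonzeroSeqs (r + 1) (s - 1) ℓ)
      ((fun l => -l.headI.sign :: l) '' nonzeroSeqs (r + 1) (s - 1) (ℓ - 1)) := by
    refine Set.disjoint_left.2 ?_
    rintro _ (⟨m, hm, rfl⟩ | ⟨m, hm, rfl⟩) ⟨m', -, h⟩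
    · exact bumpHead_ne_cons hm (by simpa using Int.natAbs_sign_le_one _) m' h.symm
    · obtain ⟨h₁, rfl⟩ := List.cons.inj h
      obtain ⟨b, t, rfl⟩ := List.exists_cons_of_ne_nil hm.1
      exact hm.2.2.1 b (by simp) (Int.sign_eq_zero_iff_zero.1 (by rw [List.headI_cons] at h₁; omega))
  have hinj₁ : Function.Injective fun l : List ℤ => l.headI.sign :: l :=
    fun _ _ h => (List.cons.inj h).2
  have hinj₂ : Function.Injective fun l : List ℤ => -l.headI.sign :: l :=
    fun _ _ h => (List.cons.inj h).2
  rw [nonzeroSeqs_eq_union hs, Set.ncard_union_eq hdisj₂, Set.ncard_union_eq hdisj₁,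
    Set.ncard_image_of_injective _ bumpHead_injective,
    Set.ncard_image_of_injective _ hinj₁, Set.ncard_image_of_injective _ hinj₂]

theorem ncard_nonzeroSeqs_recursion (hs : 3 ≤ s) :
    (nonzeroSeqs r s ℓ).ncard = 2 * (nonzeroSeqs r (s - 1) ℓ).ncard +
      2 * (nonzeroSeqs r (s - 2) (ℓ - 1)).ncard + (nonzeroSeqs r (s - 2) (ℓ - 2)).ncard := by
  have hr : r + 1 + 1 = r := by revert r; decide
  have h₀ := ncard_nonzeroSeqs (r := r) (ℓ := ℓ) (by omega : 2 ≤ s)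
  have h₁ := ncard_nonzeroSeqs (r := r) (ℓ := ℓ) (by omega : 2 ≤ s - 1)
  have h₂ := ncard_nonzeroSeqs (r := r + 1) (ℓ := ℓ) (by omega : 2 ≤ s - 1)
  have h₃ := ncard_nonzeroSeqs (r := r + 1) (ℓ := ℓ - 1) (by omega : 2 ≤ s - 1)
  simp only [hr, sub_sub, one_add_one_eq_two] at h₁ h₂ h₃
  omega

end nonzeroSeqs

lemma e_eq_ncard_nonzeroSeqs {c b : ℕ} {s ℓ : ℤ} (hs : s = c - b + 1) (hℓ : ℓ = c - 2 * b + 2) :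
    e c b = (nonzeroSeqs 0 s ℓ).ncard := by
  rw [e]
  congr 1
  ext l
  simp only [Eset, nonzeroSeqs, IsECF, Set.mem_ofPred_eq, ZMod.natCast_eq_zero_iff_even]
  constructor
  · rintro ⟨⟨hne, hev, hnz⟩, hc, hb⟩
    exact ⟨hne, hev, hnz, by omega, by omega⟩
  · rintro ⟨hne, hev, hnz, hs, hℓ⟩
    exact ⟨⟨hne, hev, hnz⟩, by omega, by omega⟩

lemma e_zero_right (c : ℕ) : e c 0 = 0 := by
  rw [e_eq_ncard_nonzeroSeqs rfl rfl, nonzeroSeqs_eq_empty (Or.inr (by push_cast; omega)),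
    Set.ncard_empty]

theorem e_recursion (c b : ℕ) (hc : 6 ≤ c) :
    e c b = e (c - 2) b + 2 * e (c - 2) (b - 1) + 2 * e (c - 3) (b - 1) := by
  rcases b with _ | b
  · simp [e_zero_right]
  rw [e_eq_ncard_nonzeroSeqs (s := c - b) (ℓ := c - 2 * b) (by omega) (by omega),
    e_eq_ncard_nonzeroSeqs (s := c - b - 2) (ℓ := c - 2 * b - 2) (by omega) (by omega),
    e_eq_ncard_nonzeroSeqs (s := c - b - 1) (ℓ := c - 2 * b) (by omega) (by omega),
    e_eq_ncard_nonzeroSeqs (s := c - b - 2) (ℓ := c - 2 * b - 1) (by omega) (by omega)]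
  rcases le_or_gt 3 ((c : ℤ) - b) with hs | hs
  · rw [ncard_nonzeroSeqs_recursion hs]
    ring_nf
  · simp (disch := omega) only [ncard_nonzeroSeqs_of_neg, mul_zero, add_zero]
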